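/- For all d ≥ 1, applying the regularization map reg coefficientwise to the generating series ρ(W)_d of words in ℚ⟨B⟩ yields reg ρ(W)_d(Y₀; X₁,…,X_d; Y₁,…,Y_d) = ρ⁰(W⁰)_d(X₁,…,X_d; Y₁−Y₀, Y₂−Y₀, …, Y_d−Y₀), an identity of formal power series with coefficients in ℚ⟨B⟩⁰ (the right-hand side is the generating series ρ⁰(W⁰)_d with each Y_i replaced by Y_i − Y₀). -/

import Mathlib

/-!
STATEMENT 7: the regularization applied coefficientwise to the generating series of
words in `ℚ⟨B⟩` yields the generating series of words in `ℚ⟨B⟩⁰` with `Y_i` replaced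
by `Y_i - Y₀`:
`reg ρ(W)_d(Y₀; X₁,…,X_d; Y₁,…,Y_d) = ρ⁰(W⁰)_d(X₁,…,X_d; Y₁-Y₀,…,Y_d-Y₀)`.

`ℚ⟨B⟩` is realized as the space of finite `ℚ`-linear combinations of words
(lists of `ℕ`, the letter `i` standing for `b_i`).  Formal power series are
functions from exponents; the variable `X_i` is `Sum.inl i` (for `i = 1,…,d`) and
`Y_i` is `Sum.inr i` (for `i = 0,…,d`).
-/

open Finsupp

/-- `ℚ⟨B⟩`. -/
abbrev QB : Type := List ℕ →₀ ℚ

/-- The word `b_{s₁} ⋯ b_{s_l}`; `wB []` is the empty word `𝟏`. -/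
noncomputable def wB (w : List ℕ) : QB := Finsupp.single w 1

/-- Left concatenation by the letter `b_a`, extended `ℚ`-linearly. -/
noncomputable def consB (a : ℕ) (x : QB) : QB := Finsupp.mapDomain (List.cons a) x

/-- The balanced quasi-shuffle product `∗_b` on words. -/
noncomputable def bshW : List ℕ → List ℕ → QB
  | [], w => wB w
  | i :: u, [] => wB (i :: u)
  | i :: u, j :: v =>
      consB i (bshW u (j :: v)) + consB j (bshW (i :: u) v) +
        (if 1 ≤ i ∧ 1 ≤ j then consB (i + j) (bshW u v) else 0)
  termination_by u v => u.length + v.length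

/-- The balanced quasi-shuffle product `∗_b` on `ℚ⟨B⟩` (ℚ-bilinear extension). -/
noncomputable def bsh (x y : QB) : QB :=
  x.sum fun u a => y.sum fun v b => (a * b) • bshW u v

/-- `ℚ⟨B⟩⁰`: the subspace of `ℚ⟨B⟩` spanned by `𝟏` and the words not starting in `b₀`. -/
noncomputable def QB0 : Submodule ℚ QB :=
  Submodule.span ℚ {x | ∃ w : List ℕ, w.head? ≠ some 0 ∧ x = wB w}

/-- The `n`-fold `∗_b`-power `b₀^{∗_b n}` of the letter `b₀`. -/
noncomputable def bpow : ℕ → QB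
  | 0 => wB []
  | n + 1 => bsh (bpow n) (wB [0])

/-- The regularization map `reg_T : ℚ⟨B⟩⁰[T] → ℚ⟨B⟩`, `w T^n ↦ w ∗_b b₀^{∗_b n}`. -/
noncomputable def regT (P : ℕ →₀ QB) : QB := P.sum fun n x => bsh x (bpow n)

instance : Nonempty {P : ℕ →₀ QB // ∀ n, P n ∈ QB0} :=
  ⟨⟨0, fun n => by simp [Submodule.zero_mem]⟩⟩

/-- The regularization `reg : ℚ⟨B⟩ → ℚ⟨B⟩⁰ ⊆ ℚ⟨B⟩`: apply the inverse of `reg_T` and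
then evaluate at `T = 0` (i.e. take the constant coefficient). -/
noncomputable def reg (x : QB) : QB :=
  ((Function.invFun (fun P : {P : ℕ →₀ QB // ∀ n, P n ∈ QB0} => regT P.1) x).1) 0

/-- Exponents of monomials in the variables `X_i = Sum.inl i`, `Y_i = Sum.inr i`. -/
abbrev Expo : Type := (ℕ ⊕ ℕ) →₀ ℕ

open scoped Classical in
/-- The generating series of words of `ℚ⟨B⟩`,
`ρ(W)(Y_{y₀}; X_{i}, … ; Y_{i}, …)` over the positions `i ∈ l`, with leading
`Y`-variable `Y_{y₀}`. -/
noncomputable def genBfull (y₀ : ℕ) (l : List ℕ) : Expo → QB := fun e =>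
  if (∀ j : ℕ, j ∉ l → e (Sum.inl j) = 0) ∧
      (∀ j : ℕ, j ≠ y₀ → j ∉ l → e (Sum.inr j) = 0) then
    wB (List.replicate (e (Sum.inr y₀)) 0 ++
      (l.map fun i => (e (Sum.inl i) + 1) :: List.replicate (e (Sum.inr i)) 0).flatten)
  else 0

open scoped Classical in
/-- The generating series `ρ⁰(W⁰)_d(X₁,…,X_d; Y₁-Y₀, …, Y_d-Y₀)` of words of `ℚ⟨B⟩⁰`
with each `Y_i` replaced by `Y_i - Y₀`.  Its coefficient at
`Y₀^{m₀} X₁^{k₁-1}Y₁^{μ₁} ⋯ X_d^{k_d-1}Y_d^{μ_d}` is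
`∑_{t₁+⋯+t_d = m₀} (-1)^{m₀} ∏ᵢ (μᵢ+tᵢ choose tᵢ) · b_{k₁}b₀^{μ₁+t₁}⋯b_{k_d}b₀^{μ_d+t_d}`. -/
noncomputable def genBsub (d : ℕ) : Expo → QB := fun e =>
  if (∀ j : ℕ, (j = 0 ∨ d < j) → e (Sum.inl j) = 0) ∧
      (∀ j : ℕ, d < j → e (Sum.inr j) = 0) then
    ∑ t ∈ Finset.Nat.antidiagonalTuple d (e (Sum.inr 0)),
      ((-1 : ℚ) ^ (e (Sum.inr 0)) *
          ∏ i : Fin d, (Nat.choose (e (Sum.inr ((i : ℕ) + 1)) + t i) (t i) : ℚ)) •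
        wB ((List.ofFn fun i : Fin d =>
          (e (Sum.inl ((i : ℕ) + 1)) + 1) ::
            List.replicate (e (Sum.inr ((i : ℕ) + 1)) + t i) 0).flatten)
  else 0

section Helpers

open Finsupp

/-- prepend `j` zeros -/
noncomputable def zer (j : ℕ) (x : QB) : QB :=
  Finsupp.mapDomain (fun w => List.replicate j 0 ++ w) x

lemma consB_wB (a : ℕ) (w : List ℕ) : consB a (wB w) = wB (a :: w) := by
  simp [consB, wB, Finsupp.mapDomain_single]

lemma consB_zero (a : ℕ) : consB a 0 = 0 := by simp [consB]

lemma consB_add (a : ℕ) (x y : QB) : consB a (x + y) = consB a x + consB a y := by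
  simp [consB, Finsupp.mapDomain_add]

lemma consB_smul (a : ℕ) (c : ℚ) (x : QB) : consB a (c • x) = c • consB a x := by
  simp [consB, Finsupp.mapDomain_smul]

lemma consB_sum {ι : Type*} (a : ℕ) (S : Finset ι) (f : ι → QB) :
    consB a (∑ i ∈ S, f i) = ∑ i ∈ S, consB a (f i) := by
  simp [consB, Finsupp.mapDomain_finset_sum]

lemma consB_apply_cons (a : ℕ) (x : QB) (w : List ℕ) : consB a x (a :: w) = x w := by
  simpa [consB] using Finsupp.mapDomain_apply (List.cons_injective (a := a)) x w

lemma consB_apply_ne (a : ℕ) (x : QB) (w : List ℕ) (h : w.head? ≠ some a) :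
    consB a x w = 0 := by
  apply Finsupp.mapDomain_notin_range
  rintro ⟨w', rfl⟩
  simp at h

lemma consB_ne_zero {a : ℕ} {x : QB} {w : List ℕ} (h : consB a x w ≠ 0) :
    ∃ w', w = a :: w' ∧ x w' ≠ 0 := by
  rcases w with _ | ⟨b, w'⟩
  · exact absurd (consB_apply_ne a x [] (by simp)) h
  · rcases eq_or_ne b a with rfl | hb
    · exact ⟨w', rfl, by rwa [consB_apply_cons] at h⟩
    · exact absurd (consB_apply_ne a x (b :: w') (by simpa using hb)) h

lemma zer_zero (x : QB) : zer 0 x = x := by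
  simp only [zer, List.replicate_zero, List.nil_append]
  exact Finsupp.mapDomain_id

lemma zer_succ (j : ℕ) (x : QB) : zer (j + 1) x = consB 0 (zer j x) := by
  simp only [zer, consB, List.replicate_succ]
  rw [← Finsupp.mapDomain_comp]
  rfl

lemma zer_wB (j : ℕ) (w : List ℕ) : zer j (wB w) = wB (List.replicate j 0 ++ w) := by
  simp [zer, wB, Finsupp.mapDomain_single]

lemma zer_add (j : ℕ) (x y : QB) : zer j (x + y) = zer j x + zer j y := by
  simp [zer, Finsupp.mapDomain_add]

lemma zer_smul (j : ℕ) (c : ℚ) (x : QB) : zer j (c • x) = c • zer j x := by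
  simp [zer, Finsupp.mapDomain_smul]

lemma zer_sum {ι : Type*} (j : ℕ) (S : Finset ι) (f : ι → QB) :
    zer j (∑ i ∈ S, f i) = ∑ i ∈ S, zer j (f i) := by
  simp [zer, Finsupp.mapDomain_finset_sum]

lemma zer_consB0 (j : ℕ) (x : QB) : zer j (consB 0 x) = zer (j + 1) x := by
  simp only [zer, consB]
  rw [← Finsupp.mapDomain_comp]
  congr 1
  funext w
  simp [List.replicate_succ' (n := j)]

lemma consB_zer (j : ℕ) (k : ℕ) (w : List ℕ) :
    consB k (zer j (wB w)) = wB (k :: (List.replicate j 0 ++ w)) := by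
  rw [zer_wB, consB_wB]

-- bshW unfolding lemmas
lemma bshW_nil_left (w : List ℕ) : bshW [] w = wB w := by
  rw [bshW]

lemma bshW_nil_right (u : List ℕ) : bshW u [] = wB u := by
  cases u <;> rw [bshW]

lemma bshW_cons_zero (i : ℕ) (u v : List ℕ) :
    bshW (i :: u) (0 :: v) = consB i (bshW u (0 :: v)) + consB 0 (bshW (i :: u) v) := by
  rw [bshW]
  simp

end Helpers
section BzSection

open Finsupp

lemma bshW_zeros_single (n : ℕ) :
    bshW (List.replicate n 0) [0] = ((n : ℚ) + 1) • wB (List.replicate (n + 1) 0) := by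
  induction n with
  | zero => simp [bshW_nil_left, List.replicate_succ]
  | succ n ih =>
    have e1 : List.replicate (n+1) (0:ℕ) = 0 :: List.replicate n 0 := by
      rw [List.replicate_succ]
    have e2 : List.replicate (n+1+1) (0:ℕ) = 0 :: List.replicate (n+1) 0 := by
      rw [List.replicate_succ]
    rw [e1, bshW_cons_zero, bshW_nil_right, ih, consB_smul, consB_wB, consB_wB, e2, e1,
      Nat.cast_succ]
    module

/-- linear extension of `u ↦ u ∗ b₀^n` (without the factorial). -/
noncomputable def Bz (n : ℕ) (x : QB) : QB :=
  x.sum fun u c => c • bshW u (List.replicate n 0)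

lemma Bz_single (n : ℕ) (u : List ℕ) (c : ℚ) :
    Bz n (Finsupp.single u c) = c • bshW u (List.replicate n 0) := by
  rw [Bz, Finsupp.sum_single_index]
  simp

lemma Bz_wB (n : ℕ) (u : List ℕ) : Bz n (wB u) = bshW u (List.replicate n 0) := by
  rw [wB, Bz_single, one_smul]

lemma Bz_zero_x (n : ℕ) : Bz n (0 : QB) = 0 := by
  simp [Bz]

lemma Bz_add (n : ℕ) (x y : QB) : Bz n (x + y) = Bz n x + Bz n y := by
  rw [Bz, Bz, Bz]
  exact Finsupp.sum_add_index' (by simp) (by intro u a b; rw [add_smul])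

lemma Bz_smul (n : ℕ) (c : ℚ) (x : QB) : Bz n (c • x) = c • Bz n x := by
  rw [Bz, Bz, Finsupp.sum_smul_index (by simp), Finsupp.smul_sum]
  simp [mul_smul]

lemma Bz_sum {ι : Type*} (n : ℕ) (S : Finset ι) (f : ι → QB) :
    Bz n (∑ i ∈ S, f i) = ∑ i ∈ S, Bz n (f i) := by
  classical
  induction S using Finset.cons_induction with
  | empty => simp [Bz_zero_x]
  | cons a S ha ih => rw [Finset.sum_cons, Bz_add, ih, Finset.sum_cons]

lemma Bz_zero (x : QB) : Bz 0 x = x := by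
  rw [Bz]
  have : ∀ (u : List ℕ) (c : ℚ), c • bshW u (List.replicate 0 0) = Finsupp.single u c := by
    intro u c
    simp [bshW_nil_right, wB, Finsupp.smul_single]
  simp_rw [this]
  exact Finsupp.sum_single x

lemma Bz1_consB (k : ℕ) (x : QB) :
    Bz 1 (consB k x) = consB k (Bz 1 x) + consB 0 (consB k x) := by
  induction x using Finsupp.induction_linear with
  | zero => simp [Bz_zero_x, consB_zero]
  | add x y hx hy => simp only [consB_add, Bz_add, hx, hy]; abel
  | single u c =>
    have hs : consB k (Finsupp.single u c) = Finsupp.single (k :: u) c := by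
      simp [consB, Finsupp.mapDomain_single]
    rw [hs, Bz_single, List.replicate_one, bshW_cons_zero, bshW_nil_right, Bz_single,
      List.replicate_one, smul_add, consB_smul]
    congr 1
    simp [wB, consB, Finsupp.mapDomain_single, Finsupp.smul_single]

lemma Bz1_zer (j : ℕ) (x : QB) :
    Bz 1 (zer j x) = zer j (Bz 1 x) + (j : ℚ) • zer (j + 1) x := by
  induction j with
  | zero => simp [zer_zero]
  | succ j ih =>
    rw [zer_succ, Bz1_consB, ih, consB_add, consB_smul]
    simp only [← zer_succ]
    rw [Nat.cast_succ, add_smul, one_smul]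
    abel

lemma Bz1_bshW (n : ℕ) : ∀ u : List ℕ,
    Bz 1 (bshW u (List.replicate n 0)) = ((n : ℚ) + 1) • bshW u (List.replicate (n + 1) 0) := by
  induction n with
  | zero =>
    intro u
    rw [List.replicate_zero, bshW_nil_right, Bz_wB]
    norm_num
  | succ n ihn =>
    intro u
    induction u with
    | nil =>
      rw [bshW_nil_left, Bz_wB, List.replicate_one, bshW_zeros_single, bshW_nil_left]
    | cons i u ihu =>
      have hrep : ∀ m : ℕ, List.replicate (m + 1) (0:ℕ) = 0 :: List.replicate m 0 := by
        intro m; rw [List.replicate_succ]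
      have hrec : bshW (i :: u) (List.replicate (n + 1) 0)
          = consB i (bshW u (List.replicate (n + 1) 0))
            + consB 0 (bshW (i :: u) (List.replicate n 0)) := by
        rw [hrep, bshW_cons_zero, ← hrep]
      have hrec2 : bshW (i :: u) (List.replicate (n + 1 + 1) 0)
          = consB i (bshW u (List.replicate (n + 1 + 1) 0))
            + consB 0 (bshW (i :: u) (List.replicate (n + 1) 0)) := by
        rw [hrep (n+1), bshW_cons_zero, ← hrep]
      rw [hrec, Bz_add, Bz1_consB, Bz1_consB, ihu, ihn (i :: u), hrec2, hrec]
      simp only [consB_add, consB_smul, smul_add, Nat.cast_succ]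
      module

lemma Bz1_Bz (n : ℕ) (x : QB) : Bz 1 (Bz n x) = ((n : ℚ) + 1) • Bz (n + 1) x := by
  induction x using Finsupp.induction_linear with
  | zero => simp [Bz_zero_x]
  | add x y hx hy => rw [Bz_add, Bz_add, hx, hy, Bz_add, smul_add]
  | single u c => rw [Bz_single, Bz_smul, Bz1_bshW, Bz_single, smul_comm]

end BzSection
section USection

open Finsupp Finset

/-- word of a block list -/
def flatB (L : List (ℕ × ℕ)) : List ℕ := L.flatMap fun p => p.1 :: List.replicate p.2 0

lemma flatB_nil : flatB [] = [] := rfl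

lemma flatB_cons (k μ : ℕ) (L : List (ℕ × ℕ)) :
    flatB ((k, μ) :: L) = k :: (List.replicate μ 0 ++ flatB L) := by
  simp [flatB]

/-- `U L s` : distributing `s` zeros into the zero-blocks of `L` with binomial weights. -/
noncomputable def U : List (ℕ × ℕ) → ℕ → QB
  | [], 0 => wB []
  | [], _ + 1 => 0
  | (k, μ) :: L, s =>
      ∑ p ∈ Finset.HasAntidiagonal.antidiagonal s,
        (((μ + p.1).choose p.1 : ℚ)) • consB k (zer (μ + p.1) (U L p.2))

lemma U_nil_zero : U [] 0 = wB [] := by rw [U]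

lemma U_nil_succ (s : ℕ) : U [] (s + 1) = 0 := by rw [U]

lemma U_cons (k μ : ℕ) (L : List (ℕ × ℕ)) (s : ℕ) :
    U ((k, μ) :: L) s
      = ∑ p ∈ Finset.HasAntidiagonal.antidiagonal s,
          (((μ + p.1).choose p.1 : ℚ)) • consB k (zer (μ + p.1) (U L p.2)) := by rw [U]

lemma U_zero (L : List (ℕ × ℕ)) : U L 0 = wB (flatB L) := by
  induction L with
  | nil => rw [U_nil_zero, flatB_nil]
  | cons p L ih =>
    obtain ⟨k, μ⟩ := p
    rw [U_cons, Finset.Nat.antidiagonal_zero, Finset.sum_singleton]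
    simp only [ih, Nat.add_zero, Nat.choose_zero_right, Nat.cast_one, one_smul]
    rw [consB_zer, flatB_cons]

/-- the key binomial fact -/
lemma choose_fact (μ c : ℕ) :
    ((μ + c + 1).choose (c + 1) : ℚ) * ((c : ℚ) + 1)
      = ((μ + c).choose c : ℚ) * ((μ : ℚ) + (c : ℚ) + 1) := by
  have h := Nat.add_one_mul_choose_eq (μ + c) c
  have h' : ((μ + c + 1) * (μ + c).choose c : ℕ) = ((μ + c + 1).choose (c + 1) * (c + 1) : ℕ) := by
    simpa [Nat.succ_eq_add_one] using h
  have h2 : (((μ + c + 1) * (μ + c).choose c : ℕ) : ℚ)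
      = (((μ + c + 1).choose (c + 1) * (c + 1) : ℕ) : ℚ) := by rw [h']
  push_cast at h2
  linarith

lemma sum_ad_shift_right (s : ℕ) (g : ℕ × ℕ → QB) :
    ∑ p ∈ Finset.HasAntidiagonal.antidiagonal s, ((p.2 : ℚ) + 1) • g (p.1, p.2 + 1)
      = ∑ q ∈ Finset.HasAntidiagonal.antidiagonal (s + 1), (q.2 : ℚ) • g q := by
  rw [Finset.Nat.antidiagonal_succ', Finset.sum_cons, Finset.sum_map]
  simp [Nat.succ_eq_add_one, Prod.map]

lemma sum_ad_shift_left (s : ℕ) (g : ℕ × ℕ → QB) :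
    ∑ p ∈ Finset.HasAntidiagonal.antidiagonal s, ((p.1 : ℚ) + 1) • g (p.1 + 1, p.2)
      = ∑ q ∈ Finset.HasAntidiagonal.antidiagonal (s + 1), (q.1 : ℚ) • g q := by
  rw [Finset.Nat.antidiagonal_succ, Finset.sum_cons, Finset.sum_map]
  simp [Nat.succ_eq_add_one, Prod.map]

lemma sum_ad_combine (s : ℕ) (g : ℕ × ℕ → QB) :
    (∑ p ∈ Finset.HasAntidiagonal.antidiagonal s, ((p.2 : ℚ) + 1) • g (p.1, p.2 + 1))
      + (∑ p ∈ Finset.HasAntidiagonal.antidiagonal s, ((p.1 : ℚ) + 1) • g (p.1 + 1, p.2))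
      = ((s : ℚ) + 1) • ∑ q ∈ Finset.HasAntidiagonal.antidiagonal (s + 1), g q := by
  rw [sum_ad_shift_right, sum_ad_shift_left, ← Finset.sum_add_distrib, Finset.smul_sum]
  apply Finset.sum_congr rfl
  intro q hq
  rw [Finset.HasAntidiagonal.mem_antidiagonal] at hq
  rw [← add_smul]
  congr 1
  have h2 : ((q.1 + q.2 : ℕ) : ℚ) = ((s + 1 : ℕ) : ℚ) := by rw [hq]
  push_cast at h2
  linarith

lemma B1 (L : List (ℕ × ℕ)) : ∀ s : ℕ,
    Bz 1 (U L s) = ((s : ℚ) + 1) • U L (s + 1) + consB 0 (U L s) := by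
  induction L with
  | nil =>
    intro s
    cases s with
    | zero =>
      rw [U_nil_zero, U_nil_succ, Bz_wB]
      simp only [List.replicate_one, smul_zero, zero_add]
      rw [bshW_nil_left, consB_wB]
    | succ s =>
      rw [U_nil_succ, U_nil_succ, Bz_zero_x, consB_zero]
      simp
  | cons p L ih =>
    obtain ⟨k, μ⟩ := p
    intro s
    have key : ∀ p : ℕ × ℕ,
        Bz 1 ((((μ + p.1).choose p.1 : ℚ)) • consB k (zer (μ + p.1) (U L p.2)))
        = ((p.2 : ℚ) + 1) •
              ((((μ + p.1).choose p.1 : ℚ)) • consB k (zer (μ + p.1) (U L (p.2 + 1))))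
          + ((p.1 : ℚ) + 1) •
              ((((μ + (p.1 + 1)).choose (p.1 + 1) : ℚ)) •
                consB k (zer (μ + (p.1 + 1)) (U L p.2)))
          + consB 0 ((((μ + p.1).choose p.1 : ℚ)) • consB k (zer (μ + p.1) (U L p.2))) := by
      rintro ⟨c, e⟩
      simp only
      rw [Bz_smul, Bz1_consB, Bz1_zer, ih e, zer_add, zer_smul, zer_consB0]
      have e2 : μ + (c + 1) = μ + c + 1 := rfl
      rw [e2]
      simp only [consB_add, consB_smul, smul_add, smul_smul]
      match_scalars <;> push_cast <;>
        first
          | ring1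
          | linear_combination choose_fact μ c
          | linear_combination -(choose_fact μ c)
    rw [U_cons, Bz_sum, Finset.sum_congr rfl (fun p _ => key p), Finset.sum_add_distrib,
      Finset.sum_add_distrib, ← consB_sum, ← U_cons,
      sum_ad_combine s (fun q => (((μ + q.1).choose q.1 : ℚ)) • consB k (zer (μ + q.1) (U L q.2))),
      ← U_cons]

lemma Bfull (n : ℕ) (L : List (ℕ × ℕ)) (s : ℕ) :
    Bz n (U L s) = ∑ p ∈ Finset.HasAntidiagonal.antidiagonal n,
      (((s + p.2).choose p.2 : ℚ)) • zer p.1 (U L (s + p.2)) := by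
  induction n with
  | zero =>
    rw [Finset.Nat.antidiagonal_zero, Finset.sum_singleton]
    simp [Bz_zero, zer_zero]
  | succ n ih =>
    have hne : ((n : ℚ) + 1) ≠ 0 := by positivity
    have hinj : Function.Injective (fun y : QB => ((n : ℚ) + 1) • y) :=
      smul_right_injective QB hne
    apply hinj
    show ((n : ℚ) + 1) • Bz (n + 1) (U L s) = _
    rw [← Bz1_Bz, ih, Bz_sum]
    have key : ∀ p : ℕ × ℕ,
        Bz 1 ((((s + p.2).choose p.2 : ℚ)) • zer p.1 (U L (s + p.2)))
        = ((p.2 : ℚ) + 1) • ((((s + (p.2 + 1)).choose (p.2 + 1) : ℚ)) •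
              zer p.1 (U L (s + (p.2 + 1))))
          + ((p.1 : ℚ) + 1) • ((((s + p.2).choose p.2 : ℚ)) •
              zer (p.1 + 1) (U L (s + p.2))) := by
      rintro ⟨a, b⟩
      simp only
      rw [Bz_smul, Bz1_zer, B1 L (s + b), smul_add, zer_add, zer_smul, zer_consB0]
      have e2 : s + (b + 1) = s + b + 1 := rfl
      rw [e2]
      simp only [smul_add, smul_smul]
      match_scalars <;> push_cast <;>
        first
          | ring1
          | linear_combination choose_fact s b
          | linear_combination -(choose_fact s b)
    rw [Finset.sum_congr rfl (fun p _ => key p), Finset.sum_add_distrib,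
      sum_ad_combine n (fun q => (((s + q.2).choose q.2 : ℚ)) • zer q.1 (U L (s + q.2)))]

/-- double antidiagonal swap -/
lemma sum_ad_swap {M : Type} [AddCommMonoid M] (m : ℕ) (F : ℕ → ℕ → ℕ → M) :
    ∑ p ∈ Finset.HasAntidiagonal.antidiagonal m, ∑ q ∈ Finset.HasAntidiagonal.antidiagonal p.2, F p.1 q.1 q.2
      = ∑ p ∈ Finset.HasAntidiagonal.antidiagonal m, ∑ q ∈ Finset.HasAntidiagonal.antidiagonal p.2, F q.1 p.1 q.2 := by
  rw [Finset.sum_sigma', Finset.sum_sigma']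
  refine Finset.sum_nbij' (i := fun x => ⟨(x.2.1, x.1.1 + x.2.2), (x.1.1, x.2.2)⟩)
    (j := fun x => ⟨(x.2.1, x.1.1 + x.2.2), (x.1.1, x.2.2)⟩) ?_ ?_ ?_ ?_ ?_
  · rintro ⟨⟨s, n⟩, ⟨a, b⟩⟩ hx
    simp only [Finset.mem_sigma, Finset.HasAntidiagonal.mem_antidiagonal] at hx ⊢
    obtain ⟨h1, h2⟩ := hx
    subst h2
    exact ⟨by omega, trivial⟩
  · rintro ⟨⟨s, n⟩, ⟨a, b⟩⟩ hx
    simp only [Finset.mem_sigma, Finset.HasAntidiagonal.mem_antidiagonal] at hx ⊢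
    obtain ⟨h1, h2⟩ := hx
    subst h2
    exact ⟨by omega, trivial⟩
  · rintro ⟨⟨s, n⟩, ⟨a, b⟩⟩ hx
    simp only [Finset.mem_sigma, Finset.HasAntidiagonal.mem_antidiagonal] at hx
    obtain ⟨h1, h2⟩ := hx
    subst h2
    rfl
  · rintro ⟨⟨s, n⟩, ⟨a, b⟩⟩ hx
    simp only [Finset.mem_sigma, Finset.HasAntidiagonal.mem_antidiagonal] at hx
    obtain ⟨h1, h2⟩ := hx
    subst h2
    rfl
  · rintro ⟨⟨s, n⟩, ⟨a, b⟩⟩ _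
    rfl

lemma alt_sum_choose (c : ℕ) :
    ∑ p ∈ Finset.HasAntidiagonal.antidiagonal c, ((-1 : ℚ) ^ p.1 * (c.choose p.2 : ℚ))
      = if c = 0 then 1 else 0 := by
  rw [Finset.Nat.sum_antidiagonal_eq_sum_range_succ_mk]
  have hsymm : ∀ k ∈ Finset.range (c + 1), ((-1 : ℚ) ^ k * (c.choose (c - k) : ℚ))
      = ((-1 : ℚ) ^ k * (c.choose k : ℚ)) := by
    intro k hk
    rw [Finset.mem_range] at hk
    rw [Nat.choose_symm (by omega)]
  rw [Finset.sum_congr rfl hsymm]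
  have h := Int.alternating_sum_range_choose (n := c)
  have h2 : ((∑ m ∈ Finset.range (c + 1), ((-1) ^ m * c.choose m : ℤ) : ℤ) : ℚ)
      = ((if c = 0 then (1 : ℤ) else 0) : ℚ) := by rw [h]; split <;> simp
  push_cast at h2
  rw [h2]

/-- the inversion identity -/
lemma inv_formula (L : List (ℕ × ℕ)) (m : ℕ) :
    ∑ p ∈ Finset.HasAntidiagonal.antidiagonal m, ((-1 : ℚ) ^ p.1) • Bz p.2 (U L p.1)
      = wB (List.replicate m 0 ++ flatB L) := by
  have step1 : ∀ p : ℕ × ℕ, ((-1 : ℚ) ^ p.1) • Bz p.2 (U L p.1)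
      = ∑ q ∈ Finset.HasAntidiagonal.antidiagonal p.2,
          ((-1 : ℚ) ^ p.1 * ((p.1 + q.2).choose q.2 : ℚ)) • zer q.1 (U L (p.1 + q.2)) := by
    rintro ⟨s, n⟩
    simp only
    rw [Bfull, Finset.smul_sum]
    simp_rw [smul_smul]
  rw [Finset.sum_congr rfl (fun p _ => step1 p)]
  rw [sum_ad_swap m (fun s a b => ((-1 : ℚ) ^ s * ((s + b).choose b : ℚ)) • zer a (U L (s + b)))]
  have step2 : ∀ p : ℕ × ℕ, p ∈ Finset.HasAntidiagonal.antidiagonal m →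
      (∑ q ∈ Finset.HasAntidiagonal.antidiagonal p.2,
        ((-1 : ℚ) ^ q.1 * ((q.1 + q.2).choose q.2 : ℚ)) • zer p.1 (U L (q.1 + q.2)))
      = (if p.2 = 0 then (1 : ℚ) else 0) • zer p.1 (U L p.2) := by
    rintro ⟨a, c⟩ _
    simp only
    have hc : ∀ q ∈ Finset.HasAntidiagonal.antidiagonal c,
        ((-1 : ℚ) ^ q.1 * ((q.1 + q.2).choose q.2 : ℚ)) • zer a (U L (q.1 + q.2))
        = ((-1 : ℚ) ^ q.1 * (c.choose q.2 : ℚ)) • zer a (U L c) := by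
      rintro ⟨s, b⟩ hq
      simp only [Finset.HasAntidiagonal.mem_antidiagonal] at hq
      simp only
      rw [show s + b = c from hq]
    rw [Finset.sum_congr rfl hc, ← Finset.sum_smul, alt_sum_choose]
  rw [Finset.sum_congr rfl step2]
  have step3 : ∑ p ∈ Finset.HasAntidiagonal.antidiagonal m,
      (if p.2 = 0 then (1 : ℚ) else 0) • zer p.1 (U L p.2)
      = zer m (U L 0) := by
    rw [Finset.sum_eq_single (m, 0)]
    · simp
    · rintro ⟨a, c⟩ hp hne
      rw [Finset.HasAntidiagonal.mem_antidiagonal] at hp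
      have : c ≠ 0 := by
        rintro rfl
        exact hne (by simp [← hp])
      simp [this]
    · intro h
      exact absurd (Finset.HasAntidiagonal.mem_antidiagonal.mpr (by simp)) h
  rw [step3, U_zero, zer_wB]

end USection
section RegTSection

open Finsupp

lemma bsh_zero_left (y : QB) : bsh 0 y = 0 := by
  simp [bsh]

lemma bsh_add_left (x x' y : QB) : bsh (x + x') y = bsh x y + bsh x' y := by
  rw [bsh, bsh, bsh]
  apply Finsupp.sum_add_index'
  · intro u
    simp [Finsupp.sum]
  · intro u a a'
    rw [← Finsupp.sum_add]
    congr 1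
    funext v b
    rw [add_mul, add_smul]

lemma bsh_sub_left (x x' y : QB) : bsh (x - x') y = bsh x y - bsh x' y := by
  rw [bsh, bsh, bsh]
  apply Finsupp.sum_sub_index
  intro u a a'
  rw [← Finsupp.sum_sub]
  congr 1
  funext v b
  rw [sub_mul, sub_smul]

lemma bsh_smul_left (c : ℚ) (x y : QB) : bsh (c • x) y = c • bsh x y := by
  rw [bsh, bsh, Finsupp.sum_smul_index, Finsupp.smul_sum]
  · congr 1
    funext u a
    rw [Finsupp.smul_sum]
    congr 1
    funext v b
    rw [mul_assoc, mul_smul]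
  · intro u
    simp [Finsupp.sum]

lemma bsh_single_right (x : QB) (w : List ℕ) (c : ℚ) :
    bsh x (Finsupp.single w c) = x.sum fun u a => (a * c) • bshW u w := by
  rw [bsh]
  congr 1
  funext u a
  rw [Finsupp.sum_single_index]
  simp

lemma bpow_eq (n : ℕ) : bpow n = Finsupp.single (List.replicate n 0) ((n.factorial : ℚ)) := by
  induction n with
  | zero => simp [bpow, wB]
  | succ n ih =>
    rw [bpow, ih, wB, bsh_single_right, Finsupp.sum_single_index]
    · rw [mul_one, bshW_zeros_single]
      rw [wB, smul_smul, Finsupp.smul_single, smul_eq_mul, mul_one]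
      congr 1
      rw [Nat.factorial_succ]
      push_cast
      ring
    · simp

lemma bsh_bpow_eq_Bz (x : QB) (n : ℕ) :
    bsh x (bpow n) = (n.factorial : ℚ) • Bz n x := by
  rw [bpow_eq, bsh_single_right, Bz, Finsupp.smul_sum]
  congr 1
  funext u a
  rw [mul_comm, mul_smul]

lemma regT_zero : regT 0 = 0 := by simp [regT]

lemma regT_single (n : ℕ) (x : QB) : regT (Finsupp.single n x) = bsh x (bpow n) := by
  rw [regT, Finsupp.sum_single_index]
  exact bsh_zero_left _

lemma regT_add (P Q : ℕ →₀ QB) : regT (P + Q) = regT P + regT Q := by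
  rw [regT, regT, regT]
  exact Finsupp.sum_add_index' (fun n => bsh_zero_left _) (fun n x y => bsh_add_left x y _)

lemma regT_sub (P Q : ℕ →₀ QB) : regT (P - Q) = regT P - regT Q := by
  rw [regT, regT, regT]
  exact Finsupp.sum_sub_index (fun n x y => bsh_sub_left x y _)

lemma regT_sum {ι : Type*} (S : Finset ι) (f : ι → (ℕ →₀ QB)) :
    regT (∑ i ∈ S, f i) = ∑ i ∈ S, regT (f i) := by
  classical
  induction S using Finset.cons_induction with
  | empty => simp [regT_zero]
  | cons a S ha ih => rw [Finset.sum_cons, regT_add, ih, Finset.sum_cons]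

end RegTSection

section WordLemmas

open Finsupp

/-- number of leading zeros -/
def lz : List ℕ → ℕ
  | [] => 0
  | 0 :: w => lz w + 1
  | (_ + 1) :: _ => 0

lemma lz_replicate_append (n : ℕ) (u : List ℕ) :
    lz (List.replicate n 0 ++ u) = n + lz u := by
  induction n with
  | zero => simp [List.replicate_zero]
  | succ n ih => rw [List.replicate_succ, List.cons_append]; simp only [lz]; omega

lemma wB_apply_ne {u w : List ℕ} (h : wB u w ≠ 0) : w = u := by
  by_contra hne
  rw [wB, Finsupp.single_apply, if_neg (fun he => hne he.symm)] at h
  exact h rfl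

/-- length of words in a shuffle with a zero word -/
lemma bshW_length_zeros (n : ℕ) : ∀ (u w : List ℕ),
    (bshW u (List.replicate n 0)) w ≠ 0 → w.length = u.length + n := by
  induction n with
  | zero =>
    intro u w h
    rw [List.replicate_zero, bshW_nil_right] at h
    rw [wB_apply_ne h]
    simp
  | succ n ihn =>
    intro u
    induction u with
    | nil =>
      intro w h
      rw [bshW_nil_left] at h
      rw [wB_apply_ne h]
      simp
    | cons i u ihu =>
      intro w h
      rw [List.replicate_succ, bshW_cons_zero] at h
      have h' : (consB i (bshW u (0 :: List.replicate n 0))) w ≠ 0 ∨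
          (consB 0 (bshW (i :: u) (List.replicate n 0))) w ≠ 0 := by
        by_contra hc
        push_neg at hc
        obtain ⟨h1, h2⟩ := hc
        apply h
        simp [Finsupp.add_apply, h1, h2]
      rcases h' with h1 | h2
      · obtain ⟨w', rfl, hw⟩ := consB_ne_zero h1
        rw [← List.replicate_succ] at hw
        have := ihu w' hw
        simp only [List.length_cons, this]
        omega
      · obtain ⟨w', rfl, hw⟩ := consB_ne_zero h2
        have := ihn (i :: u) w' hw
        simp only [List.length_cons, this]
        omega

/-- leading zeros bound for shuffles with zero-words -/
lemma bshW_lz (n : ℕ) : ∀ (u w : List ℕ),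
    (bshW u (List.replicate n 0)) w ≠ 0 → lz w ≤ lz u + n := by
  induction n with
  | zero =>
    intro u w h
    rw [List.replicate_zero, bshW_nil_right] at h
    rw [wB_apply_ne h]
    omega
  | succ n ihn =>
    intro u
    induction u with
    | nil =>
      intro w h
      rw [bshW_nil_left] at h
      rw [wB_apply_ne h, ← List.append_nil (List.replicate (n+1) 0), lz_replicate_append]
      simp [lz]
    | cons i u ihu =>
      intro w h
      rw [List.replicate_succ, bshW_cons_zero] at h
      have h' : (consB i (bshW u (0 :: List.replicate n 0))) w ≠ 0 ∨
          (consB 0 (bshW (i :: u) (List.replicate n 0))) w ≠ 0 := by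
        by_contra hc
        push_neg at hc
        obtain ⟨h1, h2⟩ := hc
        apply h
        simp [Finsupp.add_apply, h1, h2]
      rcases h' with h1 | h2
      · obtain ⟨w', rfl, hw⟩ := consB_ne_zero h1
        rw [← List.replicate_succ] at hw
        have := ihu w' hw
        cases i with
        | zero =>
          simp only [lz] at this ⊢
          omega
        | succ m =>
          simp only [lz]
          omega
      · obtain ⟨w', rfl, hw⟩ := consB_ne_zero h2
        have := ihn (i :: u) w' hw
        simp only [lz]
        omega

/-- coefficient extraction for words with nonzero head -/
lemma bshW_coeff (n : ℕ) : ∀ (v u : List ℕ), v.head? ≠ some 0 →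
    (bshW v (List.replicate n 0)) (List.replicate n 0 ++ u) = if u = v then 1 else 0 := by
  induction n with
  | zero =>
    intro v u _
    rw [List.replicate_zero, bshW_nil_right, List.nil_append, wB, Finsupp.single_apply]
    by_cases h : u = v
    · rw [if_pos h, if_pos h.symm]
    · rw [if_neg h, if_neg (fun he => h he.symm)]
  | succ n ihn =>
    intro v u hv
    cases v with
    | nil =>
      rw [bshW_nil_left, wB, Finsupp.single_apply]
      by_cases h : u = []
      · subst h
        simp
      · rw [if_neg h, if_neg]
        intro he
        exact h (by simpa using he.symm)
    | cons i v' =>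
      have hi : i ≠ 0 := by simpa using hv
      rw [List.replicate_succ, bshW_cons_zero, List.cons_append, Finsupp.add_apply]
      rw [consB_apply_ne i _ _ (by simp [Ne.symm hi])]
      rw [consB_apply_cons, ihn (i :: v') u hv]
      simp

end WordLemmas
section QB0Section

open Finsupp

/-- the submodule of elements supported on words with nonzero head -/
noncomputable def M0 : Submodule ℚ QB where
  carrier := {x | ∀ w, x w ≠ 0 → w.head? ≠ some 0}
  zero_mem' := by intro w hw; simp at hw
  add_mem' := by
    intro x y hx hy w hw
    by_cases hxw : x w = 0
    · apply hy
      intro hyw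
      apply hw
      rw [Finsupp.add_apply, hxw, hyw, add_zero]
    · exact hx w hxw
  smul_mem' := by
    intro c x hx w hw
    apply hx
    intro hxw
    apply hw
    rw [Finsupp.smul_apply, hxw, smul_zero]

lemma QB0_le_M0 : QB0 ≤ M0 := by
  rw [QB0, Submodule.span_le]
  rintro x ⟨w, hw, rfl⟩
  intro w' hw'
  rwa [wB_apply_ne hw']

lemma head_of_mem_QB0 {x : QB} (hx : x ∈ QB0) : ∀ w, x w ≠ 0 → w.head? ≠ some 0 :=
  QB0_le_M0 hx

lemma mem_QB0_of_head {x : QB} (h : ∀ w, x w ≠ 0 → w.head? ≠ some 0) : x ∈ QB0 := by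
  have hx : x = ∑ w ∈ x.support, Finsupp.single w (x w) := (Finsupp.sum_single x).symm
  rw [hx]
  apply Submodule.sum_mem
  intro w hw
  have : Finsupp.single w (x w) = (x w) • wB w := by
    rw [wB, Finsupp.smul_single, smul_eq_mul, mul_one]
  rw [this]
  apply Submodule.smul_mem
  apply Submodule.subset_span
  exact ⟨w, h w (Finsupp.mem_support_iff.mp hw), rfl⟩

lemma U_head (L : List (ℕ × ℕ)) (hL : ∀ p ∈ L, p.1 ≠ 0) : ∀ s w,
    (U L s) w ≠ 0 → w.head? ≠ some 0 := by
  induction L with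
  | nil =>
    intro s w hw
    cases s with
    | zero =>
      rw [U_nil_zero] at hw
      rw [wB_apply_ne hw]
      simp
    | succ s => rw [U_nil_succ] at hw; simp at hw
  | cons p L ih =>
    obtain ⟨k, μ⟩ := p
    intro s w hw
    rw [U_cons] at hw
    rw [Finsupp.finset_sum_apply] at hw
    obtain ⟨q, hq, hne⟩ := Finset.exists_ne_zero_of_sum_ne_zero hw
    rw [Finsupp.smul_apply] at hne
    have h2 : (consB k (zer (μ + q.1) (U L q.2))) w ≠ 0 := by
      intro hz
      rw [hz, smul_zero] at hne
      exact hne rfl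
    obtain ⟨w', rfl, _⟩ := consB_ne_zero h2
    have : k ≠ 0 := hL (k, μ) List.mem_cons_self
    simpa using this

lemma U_mem_QB0 (L : List (ℕ × ℕ)) (hL : ∀ p ∈ L, p.1 ≠ 0) (s : ℕ) : U L s ∈ QB0 :=
  mem_QB0_of_head (U_head L hL s)

/-- key injectivity lemma -/
lemma regT_eq_zero (R : ℕ →₀ QB) (hR : ∀ n w, (R n) w ≠ 0 → w.head? ≠ some 0)
    (h : regT R = 0) : R = 0 := by
  have lzu : ∀ u : List ℕ, u.head? ≠ some 0 → lz u = 0 := by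
    intro u hu
    cases u with
    | nil => rfl
    | cons a u =>
      cases a with
      | zero => simp at hu
      | succ m => rfl
  have core : ∀ u : List ℕ, u.head? ≠ some 0 →
      (∀ v : List ℕ, v.length < u.length → v.head? ≠ some 0 → ∀ m, R m v = 0) →
      ∀ n, R n u = 0 := by
    intro u hu ihv n
    have hw0 : (regT R) (List.replicate n 0 ++ u) = 0 := by rw [h]; rfl
    rw [regT, Finsupp.sum_apply] at hw0
    rw [Finsupp.sum] at hw0
    set w := List.replicate n 0 ++ u with hwdef
    have hlzw : lz w = n := by
      rw [hwdef, lz_replicate_append, lzu u hu]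
      omega
    have hlenw : w.length = n + u.length := by
      rw [hwdef]; simp
    have hterm : ∀ m ∈ R.support, m ≠ n → (bsh (R m) (bpow m)) w = 0 := by
      intro m _ hmn
      rw [bsh_bpow_eq_Bz, Finsupp.smul_apply, Bz, Finsupp.sum_apply, Finsupp.sum]
      have hz : ∀ v ∈ (R m).support, (R m v • bshW v (List.replicate m 0)) w = 0 := by
        intro v hv
        have hvh : v.head? ≠ some 0 := hR m v (Finsupp.mem_support_iff.mp hv)
        rw [Finsupp.smul_apply]
        by_cases hbs : (bshW v (List.replicate m 0)) w = 0
        · rw [hbs, smul_zero]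
        · have hle : lz w ≤ lz v + m := bshW_lz m v w hbs
          rw [hlzw, lzu v hvh] at hle
          have hmgt : n < m := lt_of_le_of_ne (by omega) (Ne.symm hmn)
          have hlen : w.length = v.length + m := bshW_length_zeros m v w hbs
          have hvlen : v.length < u.length := by omega
          rw [ihv v hvlen hvh m, zero_smul]
      rw [Finset.sum_eq_zero hz, smul_zero]
    have hn : (bsh (R n) (bpow n)) w = (n.factorial : ℚ) * R n u := by
      rw [bsh_bpow_eq_Bz, Finsupp.smul_apply, Bz, Finsupp.sum_apply, Finsupp.sum, smul_eq_mul]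
      congr 1
      have hco : ∀ v ∈ (R n).support,
          (R n v • bshW v (List.replicate n 0)) w = if v = u then R n u else 0 := by
        intro v hv
        have hvh : v.head? ≠ some 0 := hR n v (Finsupp.mem_support_iff.mp hv)
        rw [Finsupp.smul_apply, hwdef, bshW_coeff n v u hvh]
        by_cases hvu : v = u
        · rw [if_pos hvu, if_pos (by rw [hvu]), hvu, smul_eq_mul, mul_one]
        · rw [if_neg (fun hc => hvu hc.symm), if_neg hvu, smul_zero]
      rw [Finset.sum_congr rfl hco, Finset.sum_ite_eq' (R n).support u (fun _ => R n u)]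
      by_cases hu' : u ∈ (R n).support
      · rw [if_pos hu']
      · rw [if_neg hu', Finsupp.notMem_support_iff.mp hu']
    have hfin : (n.factorial : ℚ) * R n u = 0 := by
      by_cases hns : n ∈ R.support
      · rw [← hn]
        rw [Finset.sum_eq_single_of_mem n hns hterm] at hw0
        exact hw0
      · rw [Finsupp.notMem_support_iff.mp hns]
        simp
    have hne : (n.factorial : ℚ) ≠ 0 := by positivity
    exact (mul_eq_zero.mp hfin).resolve_left hne
  have key : ∀ N : ℕ, ∀ u : List ℕ, u.length ≤ N → u.head? ≠ some 0 → ∀ n, R n u = 0 := by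
    intro N
    induction N with
    | zero =>
      intro u hu hh n
      exact core u hh (fun v hv _ _ => absurd hv (by omega)) n
    | succ N ihN =>
      intro u hu hh n
      exact core u hh (fun v hv hvh m => ihN v (by omega) hvh m) n
  ext n u
  by_cases hh : u.head? ≠ some 0
  · rw [key u.length u le_rfl hh n]
    rfl
  · push_neg at hh
    by_contra hc
    have hc' : (R n) u ≠ 0 := by
      intro h0
      apply hc
      rw [h0]
      rfl
    exact absurd hh (by simpa using hR n u hc')

lemma F_inj : Function.Injective
    (fun P : {P : ℕ →₀ QB // ∀ n, P n ∈ QB0} => regT P.1) := by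
  rintro ⟨P, hP⟩ ⟨Q, hQ⟩ h
  simp only at h
  have h0 : regT (P - Q) = 0 := by rw [regT_sub, h, sub_self]
  have hhead : ∀ n w, ((P - Q) n) w ≠ 0 → w.head? ≠ some 0 := by
    intro n w hw
    rw [Finsupp.sub_apply, Finsupp.sub_apply] at hw
    by_cases hp : P n w = 0
    · apply head_of_mem_QB0 (hQ n) w
      intro hq
      rw [hp, hq, sub_zero] at hw
      exact hw rfl
    · exact head_of_mem_QB0 (hP n) w hp
  have hz := regT_eq_zero _ hhead h0
  have : P = Q := by rwa [sub_eq_zero] at hz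
  exact Subtype.ext this

lemma reg_regT (P : ℕ →₀ QB) (hP : ∀ n, P n ∈ QB0) : reg (regT P) = P 0 := by
  rw [reg]
  have h1 : regT P = (fun P : {P : ℕ →₀ QB // ∀ n, P n ∈ QB0} => regT P.1) ⟨P, hP⟩ := rfl
  rw [h1, Function.leftInverse_invFun F_inj ⟨P, hP⟩]

end QB0Section
section OfFnSection

open Finsupp

lemma sum_adT_succ {M : Type*} [AddCommMonoid M] (d s : ℕ) (f : (Fin (d + 1) → ℕ) → M) :
    ∑ t ∈ Finset.Nat.antidiagonalTuple (d + 1) s, f t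
      = ∑ p ∈ Finset.HasAntidiagonal.antidiagonal s, ∑ t ∈ Finset.Nat.antidiagonalTuple d p.2,
          f (Fin.cons p.1 t) := by
  rw [Finset.sum_sigma']
  refine Finset.sum_nbij'
    (i := fun (t : Fin (d + 1) → ℕ) =>
      (⟨(t 0, ∑ i : Fin d, t i.succ), Fin.tail t⟩ : Σ _p : ℕ × ℕ, (Fin d → ℕ)))
    (j := fun x => Fin.cons x.1.1 x.2) ?_ ?_ ?_ ?_ ?_
  · intro t ht
    rw [Finset.Nat.mem_antidiagonalTuple] at ht
    rw [Finset.mem_sigma, Finset.HasAntidiagonal.mem_antidiagonal]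
    constructor
    · rw [← ht, Fin.sum_univ_succ]
    · rw [Finset.Nat.mem_antidiagonalTuple]
      rfl
  · rintro ⟨⟨a, c⟩, t⟩ hx
    rw [Finset.mem_sigma, Finset.HasAntidiagonal.mem_antidiagonal] at hx
    obtain ⟨h1, h2⟩ := hx
    rw [Finset.Nat.mem_antidiagonalTuple] at h2 ⊢
    rw [Fin.sum_cons, h2]
    exact h1
  · intro t _
    exact Fin.cons_self_tail t
  · rintro ⟨⟨a, c⟩, t⟩ hx
    rw [Finset.mem_sigma, Finset.HasAntidiagonal.mem_antidiagonal] at hx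
    obtain ⟨_, h2⟩ := hx
    rw [Finset.Nat.mem_antidiagonalTuple] at h2
    simp only [Fin.cons_succ, Fin.cons_zero, Fin.tail_cons]
    dsimp only at h2 ⊢
    rw [h2]
  · intro t _
    rw [Fin.cons_self_tail]

lemma U_ofFn : ∀ (d : ℕ) (G : Fin d → ℕ × ℕ) (s : ℕ),
    U (List.ofFn G) s = ∑ t ∈ Finset.Nat.antidiagonalTuple d s,
      (∏ i, (((G i).2 + t i).choose (t i) : ℚ)) •
        wB (List.flatten (List.ofFn fun i => (G i).1 :: List.replicate ((G i).2 + t i) 0)) := by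
  intro d
  induction d with
  | zero =>
    intro G s
    cases s with
    | zero =>
      rw [List.ofFn_zero, U_nil_zero, Finset.Nat.antidiagonalTuple_zero_zero,
        Finset.sum_singleton]
      simp
    | succ s =>
      rw [List.ofFn_zero, U_nil_succ, Finset.Nat.antidiagonalTuple_zero_succ]
      simp
  | succ d ih =>
    intro G s
    rw [List.ofFn_succ, ← Prod.mk.eta (p := G 0), U_cons, sum_adT_succ]
    apply Finset.sum_congr rfl
    intro p _
    rw [ih (fun i => G i.succ) p.2, zer_sum, consB_sum, Finset.smul_sum]
    apply Finset.sum_congr rfl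
    intro t _
    rw [zer_smul, consB_smul, smul_smul, consB_zer]
    congr 1
    · rw [Fin.prod_univ_succ]
      simp only [Fin.cons_zero, Fin.cons_succ]
    · congr 1
      rw [List.ofFn_succ, List.flatten_cons]
      simp only [Fin.cons_zero, Fin.cons_succ]
      rw [List.cons_append]

end OfFnSection
/-- For all `d ≥ 1`,
`reg ρ(W)_d(Y₀; X₁,…,X_d; Y₁,…,Y_d) = ρ⁰(W⁰)_d(X₁,…,X_d; Y₁-Y₀, …, Y_d-Y₀)`,
coefficientwise. -/
theorem reg_gen_series (d : ℕ) (hd : 1 ≤ d) (e : Expo) :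
    reg (genBfull 0 ((List.range d).map fun j => 1 + j) e) = genBsub d e := by
  classical
  have hl : ∀ j : ℕ, (j ∈ (List.range d).map fun j => 1 + j) ↔ (1 ≤ j ∧ j ≤ d) := by
    intro j
    simp only [List.mem_map, List.mem_range]
    constructor
    · rintro ⟨a, ha, rfl⟩
      omega
    · rintro ⟨h1, h2⟩
      exact ⟨j - 1, by omega, by omega⟩
  simp only [genBfull, genBsub]
  by_cases hC : (∀ j : ℕ, (j = 0 ∨ d < j) → e (Sum.inl j) = 0) ∧
      (∀ j : ℕ, d < j → e (Sum.inr j) = 0)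
  · -- main case
    have hC1 : (∀ j : ℕ, (j ∉ (List.range d).map fun j => 1 + j) → e (Sum.inl j) = 0) ∧
        (∀ j : ℕ, j ≠ 0 → (j ∉ (List.range d).map fun j => 1 + j) → e (Sum.inr j) = 0) := by
      constructor
      · intro j hj
        rw [hl] at hj
        exact hC.1 j (by omega)
      · intro j hj0 hj
        rw [hl] at hj
        exact hC.2 j (by omega)
    rw [if_pos hC1, if_pos hC]
    set m₀ := e (Sum.inr 0) with hm₀
    set G : Fin d → ℕ × ℕ :=
      fun i => (e (Sum.inl ((i : ℕ) + 1)) + 1, e (Sum.inr ((i : ℕ) + 1))) with hG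
    set L : List (ℕ × ℕ) := List.ofFn G with hLdef
    -- the word in the left-hand side
    have hword : (((List.range d).map fun j => 1 + j).map fun i =>
          (e (Sum.inl i) + 1) :: List.replicate (e (Sum.inr i)) 0).flatten = flatB L := by
      rw [hLdef, flatB, List.flatMap_def, List.map_ofFn, List.map_map]
      congr 1
      apply List.ext_getElem
      · simp
      · intro i h1 h2
        simp only [List.getElem_map, List.getElem_range, List.getElem_ofFn, Function.comp_apply,
          hG]
        rw [Nat.add_comm 1 i]
    have hL1 : ∀ p ∈ L, p.1 ≠ 0 := by
      intro p hp
      rw [hLdef, List.mem_ofFn] at hp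
      obtain ⟨i, rfl⟩ := hp
      simp [hG]
    -- the preimage polynomial
    set P : ℕ →₀ QB := ∑ n ∈ Finset.range (m₀ + 1),
      Finsupp.single n ((((-1 : ℚ) ^ (m₀ - n)) * ((n.factorial : ℚ))⁻¹) • U L (m₀ - n))
      with hP
    have hPapp : ∀ j, P j = if j ∈ Finset.range (m₀ + 1) then
        (((-1 : ℚ) ^ (m₀ - j)) * ((j.factorial : ℚ))⁻¹) • U L (m₀ - j) else 0 := by
      intro j
      rw [hP, Finsupp.finset_sum_apply]
      simp only [Finsupp.single_apply]
      rw [Finset.sum_ite_eq' (Finset.range (m₀ + 1)) j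
        (fun n => (((-1 : ℚ) ^ (m₀ - n)) * ((n.factorial : ℚ))⁻¹) • U L (m₀ - n))]
    have hPmem : ∀ n, P n ∈ QB0 := by
      intro n
      rw [hPapp n]
      split
      · exact Submodule.smul_mem _ _ (U_mem_QB0 L hL1 _)
      · exact Submodule.zero_mem _
    have hregT : regT P = wB (List.replicate m₀ 0 ++ flatB L) := by
      rw [hP, regT_sum]
      have hterm : ∀ n ∈ Finset.range (m₀ + 1),
          regT (Finsupp.single n
            ((((-1 : ℚ) ^ (m₀ - n)) * ((n.factorial : ℚ))⁻¹) • U L (m₀ - n)))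
          = ((-1 : ℚ) ^ (m₀ - n)) • Bz (m₀ - (m₀ - n)) (U L (m₀ - n)) := by
        intro n hn
        rw [Finset.mem_range] at hn
        rw [regT_single, bsh_smul_left, bsh_bpow_eq_Bz, smul_smul, mul_assoc,
          inv_mul_cancel₀ (show ((n.factorial : ℚ)) ≠ 0 by positivity), mul_one,
          Nat.sub_sub_self (by omega)]
      rw [Finset.sum_congr rfl hterm]
      have e1 : ∀ n ∈ Finset.range (m₀ + 1),
          ((-1 : ℚ) ^ (m₀ - n)) • Bz (m₀ - (m₀ - n)) (U L (m₀ - n))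
          = (fun k => ((-1 : ℚ) ^ k) • Bz (m₀ - k) (U L k)) (m₀ + 1 - 1 - n) := by
        intro n _
        simp only
        rw [show m₀ + 1 - 1 - n = m₀ - n from by omega]
      rw [Finset.sum_congr rfl e1,
        Finset.sum_range_reflect (fun k => ((-1 : ℚ) ^ k) • Bz (m₀ - k) (U L k)) (m₀ + 1),
        ← Finset.Nat.sum_antidiagonal_eq_sum_range_succ_mk
          (fun p => ((-1 : ℚ) ^ p.1) • Bz (p.2) (U L p.1))]
      exact inv_formula L m₀
    -- compute reg
    rw [hword, ← hregT, reg_regT P hPmem, hPapp 0]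
    rw [if_pos (by simp), Nat.sub_zero, Nat.factorial_zero, Nat.cast_one, inv_one, mul_one]
    -- closed form of U
    rw [hLdef, U_ofFn d G m₀, Finset.smul_sum]
    apply Finset.sum_congr rfl
    intro t _
    rw [smul_smul]
  · -- degenerate case
    have hC1 : ¬ ((∀ j : ℕ, (j ∉ (List.range d).map fun j => 1 + j) → e (Sum.inl j) = 0) ∧
        (∀ j : ℕ, j ≠ 0 → (j ∉ (List.range d).map fun j => 1 + j) → e (Sum.inr j) = 0)) := by
      intro hC1
      apply hC
      constructor
      · intro j hj
        apply hC1.1 j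
        rw [hl]
        omega
      · intro j hj
        apply hC1.2 j (by omega)
        rw [hl]
        omega
    rw [if_neg hC1, if_neg hC]
    have h0 : reg (regT (0 : ℕ →₀ QB)) = (0 : ℕ →₀ QB) 0 :=
      reg_regT 0 (fun n => by
        rw [Finsupp.coe_zero, Pi.zero_apply]
        exact Submodule.zero_mem QB0)
    rw [regT_zero] at h0
    rw [h0]
    rfl
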